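/- Let M be the deterministic 2-machine with state set {s, t, u, v}, transitions f(s,(1,2)) = t, f(t,(1,2)) = t, f(t,(2,1)) = u, f(u,(1,2)) = v, all other transitions ∅, and bad set {s} × {t, v}. Then a digraph G is M-good if and only if G is the Hasse diagram of a poset, i.e., G has no directed cycles of positive length and there is no edge (a,b) of G for which there exists a directed path in G from a to b of length at least 2. -/
import Mathlib
set_option maxHeartbeats 1000000


/-- A set of `k`-ary edges forms a (k-uniform) directed hypergraph if
no edge has two equal coordinates. -/
def IsHypergraph {V : Type} {k : ℕ} (E : Set (Fin k → V)) : Prop :=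
  ∀ e ∈ E, Function.Injective e

/-- The hypergraph `(V, E)` admits a proper coloring with `m` colors:
on each edge, not all vertices receive the same color.  The chromatic number
is at most `m` iff this holds, and is greater than `m` iff it fails. -/
def Colorable {V : Type} {k : ℕ} (E : Set (Fin k → V)) (m : ℕ) : Prop :=
  ∃ c : V → Fin m, ∀ e ∈ E, ∃ i j : Fin k, c (e i) ≠ c (e j)

/-- The hypergraph `(V, E)` has an `M`-bad cycle (of any length, including
length 0), for the `k`-machine `M = (S, f, B)`. -/
def HasMBadCycle' {V S : Type} {k : ℕ} (E : Set (Fin k → V))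
    (f : S → Fin k × Fin k → Set S) (B : Set (S × S)) : Prop :=
  ∃ (n : ℕ) (v : Fin (n+1) → V) (e : Fin n → (Fin k → V)) (s : Fin (n+1) → S),
    v (Fin.last n) = v 0 ∧
    (∀ i : Fin n, e i ∈ E) ∧
    (∀ i : Fin n, ∃ a b : Fin k,
      e i a = v i.castSucc ∧ e i b = v i.succ ∧ s i.succ ∈ f (s i.castSucc) (a, b)) ∧
    (s 0, s (Fin.last n)) ∈ B

/-- `x` is joined to `y` by an edge of the digraph `(V, E)`. -/
def Adj {V : Type} (E : Set (Fin 2 → V)) (x y : V) : Prop :=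
  ∃ e ∈ E, e 0 = x ∧ e 1 = y

/-- The digraph `(V, E)` is the Hasse diagram of a poset: it has no directed
cycles of positive length, and no edge `(a, b)` for which there is a directed
path from `a` to `b` of length at least 2. -/
def IsHasseDiagram {V : Type} (E : Set (Fin 2 → V)) : Prop :=
  (¬ ∃ (n : ℕ) (v : Fin (n+1) → V), 0 < n ∧ v (Fin.last n) = v 0 ∧
      ∀ i : Fin n, Adj E (v i.castSucc) (v i.succ)) ∧
  (¬ ∃ a b : V, Adj E a b ∧ ∃ (n : ℕ) (v : Fin (n+1) → V), 2 ≤ n ∧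
      v 0 = a ∧ v (Fin.last n) = b ∧
      ∀ i : Fin n, Adj E (v i.castSucc) (v i.succ))

/-- The transition function of the deterministic 2-machine of Example 1:
states `s, t, u, v` are `0, 1, 2, 3 : Fin 4`; coordinates `1, 2` are
`0, 1 : Fin 2`; `f(s,(1,2)) = t`, `f(t,(1,2)) = t`, `f(t,(2,1)) = u`,
`f(u,(1,2)) = v`, and all other values are `∅`. -/
def hasseMachine : Fin 4 → Fin 2 × Fin 2 → Set (Fin 4) := fun st p =>
  if st = 0 ∧ p = ((0 : Fin 2), (1 : Fin 2)) then {1}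
  else if st = 1 ∧ p = ((0 : Fin 2), (1 : Fin 2)) then {1}
  else if st = 1 ∧ p = ((1 : Fin 2), (0 : Fin 2)) then {2}
  else if st = 2 ∧ p = ((0 : Fin 2), (1 : Fin 2)) then {3}
  else ∅

/-- The bad set `{s} × {t, v}` of the machine of Example 1. -/
def hasseBad : Set (Fin 4 × Fin 4) :=
  {x | x.1 = 0 ∧ (x.2 = 1 ∨ x.2 = 3)}

lemma mach01 : ∀ st : Fin 4, st = 0 ∨ st = 1 → (1 : Fin 4) ∈ hasseMachine st (0, 1) := by
  rintro st (h | h) <;> subst h <;> simp [hasseMachine]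

lemma mach10 : (2 : Fin 4) ∈ hasseMachine 1 (1, 0) := by simp [hasseMachine]

lemma mach23 : (3 : Fin 4) ∈ hasseMachine 2 (0, 1) := by simp [hasseMachine]

lemma step_cases {V : Type} {E : Set (Fin 2 → V)} {x y : V} {p q : Fin 4}
    (h : ∃ ee ∈ E, ∃ a b : Fin 2, ee a = x ∧ ee b = y ∧ q ∈ hasseMachine p (a, b)) :
    (p = 0 ∧ q = 1 ∧ Adj E x y) ∨ (p = 1 ∧ q = 1 ∧ Adj E x y) ∨
    (p = 1 ∧ q = 2 ∧ Adj E y x) ∨ (p = 2 ∧ q = 3 ∧ Adj E x y) := by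
  obtain ⟨ee, heE, a, b, h1, h2, h3⟩ := h
  unfold hasseMachine at h3
  split_ifs at h3 with c1 c2 c3 c4
  · obtain ⟨hp, hab⟩ := c1
    obtain ⟨ha, hb⟩ := Prod.mk.injEq .. ▸ hab
    subst ha hb
    exact Or.inl ⟨hp, h3, ee, heE, h1, h2⟩
  · obtain ⟨hp, hab⟩ := c2
    obtain ⟨ha, hb⟩ := Prod.mk.injEq .. ▸ hab
    subst ha hb
    exact Or.inr (Or.inl ⟨hp, h3, ee, heE, h1, h2⟩)
  · obtain ⟨hp, hab⟩ := c3
    obtain ⟨ha, hb⟩ := Prod.mk.injEq .. ▸ hab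
    subst ha hb
    exact Or.inr (Or.inr (Or.inl ⟨hp, h3, ee, heE, h2, h1⟩))
  · obtain ⟨hp, hab⟩ := c4
    obtain ⟨ha, hb⟩ := Prod.mk.injEq .. ▸ hab
    subst ha hb
    exact Or.inr (Or.inr (Or.inr ⟨hp, h3, ee, heE, h1, h2⟩))
  · exact absurd h3 (Set.notMem_empty q)

lemma bad_analysis {V : Type} {E : Set (Fin 2 → V)} {n : ℕ} {v : Fin (n+1) → V}
    {e : Fin n → Fin 2 → V} {s : Fin (n+1) → Fin 4}
    (he : ∀ i : Fin n, e i ∈ E)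
    (hstep : ∀ i : Fin n, ∃ a b : Fin 2,
      e i a = v i.castSucc ∧ e i b = v i.succ ∧ s i.succ ∈ hasseMachine (s i.castSucc) (a, b))
    (hs0 : s 0 = 0) :
    ∀ k, (hk : k ≤ n) →
    ((s ⟨k, by omega⟩ = 0 ∨ s ⟨k, by omega⟩ = 1) ∧
        ∀ j : Fin n, j.val < k → Adj E (v j.castSucc) (v j.succ)) ∨
    (s ⟨k, by omega⟩ = 2 ∧ 2 ≤ k ∧ Adj E (v ⟨k, by omega⟩) (v ⟨k-1, by omega⟩) ∧
        ∀ j : Fin n, j.val < k - 1 → Adj E (v j.castSucc) (v j.succ)) ∨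
    (s ⟨k, by omega⟩ = 3 ∧ 3 ≤ k ∧ Adj E (v ⟨k-1, by omega⟩) (v ⟨k, by omega⟩) ∧
        Adj E (v ⟨k-1, by omega⟩) (v ⟨k-2, by omega⟩) ∧
        ∀ j : Fin n, j.val < k - 2 → Adj E (v j.castSucc) (v j.succ)) := by
  intro k
  induction k with
  | zero =>
    intro hk
    left
    constructor
    · left; exact hs0
    · intro j hj; omega
  | succ k ih =>
    intro hk
    have hkn : k ≤ n := by omega
    have IH := ih hkn
    set i : Fin n := ⟨k, by omega⟩ with hi
    have hcs : i.castSucc = (⟨k, by omega⟩ : Fin (n+1)) := rfl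
    have hsc : i.succ = (⟨k+1, by omega⟩ : Fin (n+1)) := rfl
    have hst := step_cases (x := v i.castSucc) (y := v i.succ)
      (p := s i.castSucc) (q := s i.succ)
      ⟨e i, he i, hstep i⟩
    rw [hcs, hsc] at hst
    rcases IH with ⟨hsk, hpath⟩ | ⟨hsk, hk2, hadj, hpath⟩ | ⟨hsk, hk3, _, _, _⟩
    · rcases hst with ⟨hp, hq, hadj⟩ | ⟨hp, hq, hadj⟩ | ⟨hp, hq, hadj⟩ | ⟨hp, hq, hadj⟩
      · left
        refine ⟨Or.inr hq, ?_⟩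
        intro j hj
        rcases Nat.lt_succ_iff_lt_or_eq.mp hj with h | h
        · exact hpath j h
        · have : j = i := Fin.ext h
          rw [this]; rw [hcs, hsc]; exact hadj
      · left
        refine ⟨Or.inr hq, ?_⟩
        intro j hj
        rcases Nat.lt_succ_iff_lt_or_eq.mp hj with h | h
        · exact hpath j h
        · have : j = i := Fin.ext h
          rw [this]; rw [hcs, hsc]; exact hadj
      · have hk1 : 1 ≤ k := by
          by_contra h
          have hk0 : k = 0 := by omega
          subst hk0
          have : s (⟨0, by omega⟩ : Fin (n+1)) = 0 := hs0
          rw [this] at hp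
          exact absurd hp (by decide)
        right; left
        refine ⟨hq, by omega, ?_, ?_⟩
        · have : (⟨k+1-1, by omega⟩ : Fin (n+1)) = ⟨k, by omega⟩ := by
            simp only [Fin.mk.injEq]; omega
          rw [this]; exact hadj
        · intro j hj
          exact hpath j (by omega)
      · rcases hsk with h | h <;> rw [h] at hp <;> exact absurd hp (by decide)
    · rcases hst with ⟨hp, hq, hadj2⟩ | ⟨hp, hq, hadj2⟩ | ⟨hp, hq, hadj2⟩ | ⟨hp, hq, hadj2⟩
      · rw [hsk] at hp; exact absurd hp (by decide)
      · rw [hsk] at hp; exact absurd hp (by decide)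
      · rw [hsk] at hp; exact absurd hp (by decide)
      · right; right
        have e1 : (⟨k+1-1, by omega⟩ : Fin (n+1)) = ⟨k, by omega⟩ := by
          simp only [Fin.mk.injEq]; omega
        have e2 : (⟨k+1-2, by omega⟩ : Fin (n+1)) = ⟨k-1, by omega⟩ := by
          simp only [Fin.mk.injEq]; omega
        refine ⟨hq, by omega, ?_, ?_, ?_⟩
        · rw [e1]; exact hadj2
        · rw [e1, e2]; exact hadj
        · intro j hj; exact hpath j (by omega)
    · rw [hsk] at hst
      rcases hst with ⟨hp, _⟩ | ⟨hp, _⟩ | ⟨hp, _⟩ | ⟨hp, _⟩ <;> exact absurd hp (by decide)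

lemma cycle_bad {V : Type} {E : Set (Fin 2 → V)} {n : ℕ} (hn : 0 < n)
    {v : Fin (n+1) → V} (hc : v (Fin.last n) = v 0)
    (hp : ∀ i : Fin n, Adj E (v i.castSucc) (v i.succ)) :
    HasMBadCycle' E hasseMachine hasseBad := by
  refine ⟨n, v, fun i => (hp i).choose,
    fun i => if i.val = 0 then 0 else 1, hc, fun i => (hp i).choose_spec.1, ?_, ?_⟩
  · intro i
    refine ⟨0, 1, (hp i).choose_spec.2.1, (hp i).choose_spec.2.2, ?_⟩
    have h1 : (i.succ.val = 0) = False := by simp [Fin.val_succ]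
    simp only [h1, if_false, Fin.coe_castSucc]
    apply mach01
    by_cases h : i.val = 0 <;> simp [h]
  · constructor
    · simp
    · have : (Fin.last n).val = n := rfl
      simp only [this]
      rw [if_neg (by omega)]
      left; rfl

lemma path_bad {V : Type} {E : Set (Fin 2 → V)} {a b : V} (hab : Adj E a b) {n : ℕ}
    (hn : 2 ≤ n) {w : Fin (n+1) → V} (hw0 : w 0 = a) (hwl : w (Fin.last n) = b)
    (hp : ∀ i : Fin n, Adj E (w i.castSucc) (w i.succ)) :
    HasMBadCycle' E hasseMachine hasseBad := by
  set W : ℕ → V := fun j => w ⟨min j n, by omega⟩ with hW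
  have hWw : ∀ j (h : j ≤ n), W j = w ⟨j, by omega⟩ := by
    intro j h
    simp only [hW]
    congr 1
    exact Fin.ext (by simp; omega)
  have hP : ∀ j, j < n → Adj E (W j) (W (j+1)) := by
    intro j hj
    rw [hWw j (by omega), hWw (j+1) (by omega)]
    have h1 : (⟨j, by omega⟩ : Fin (n+1)) = (⟨j, hj⟩ : Fin n).castSucc := rfl
    have h2 : (⟨j+1, by omega⟩ : Fin (n+1)) = (⟨j, hj⟩ : Fin n).succ := rfl
    rw [h1, h2]; exact hp _
  have hWa : W 0 = a := by rw [hWw 0 (by omega)]; exact hw0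
  have hWb : W n = b := by rw [hWw n le_rfl]; exact hwl
  refine ⟨n+1,
    fun i => if i.val < n then W (i.val+1) else if i.val = n then a else W 1,
    fun i => if h : i.val + 1 < n then (hP (i.val+1) h).choose
             else if i.val + 1 = n then hab.choose else (hP 0 (by omega)).choose,
    fun i => if i.val = 0 then 0 else if i.val < n then 1 else if i.val = n then 2 else 3,
    ?_, ?_, ?_, ?_⟩
  · have h1 : (Fin.last (n+1)).val = n+1 := rfl
    dsimp only
    rw [h1, if_neg (show ¬(n+1 < n) by omega), if_neg (show ¬(n+1 = n) by omega)]
    rw [show ((0 : Fin (n+2)).val = 0) from rfl, if_pos (show 0 < n by omega)]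
  · intro i
    dsimp only
    split_ifs with h1 h2
    · exact (hP (i.val+1) h1).choose_spec.1
    · exact hab.choose_spec.1
    · exact (hP 0 (by omega)).choose_spec.1
  · intro i
    have hiv : i.val < n + 1 := i.isLt
    have hcs : i.castSucc.val = i.val := rfl
    have hsc : i.succ.val = i.val + 1 := rfl
    by_cases h1 : i.val + 1 < n
    · refine ⟨0, 1, ?_, ?_, ?_⟩
      · dsimp only
        rw [dif_pos h1, hcs, if_pos (show i.val < n by omega)]
        exact (hP _ h1).choose_spec.2.1
      · dsimp only
        rw [dif_pos h1, hsc, if_pos (show i.val + 1 < n from h1)]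
        exact (hP _ h1).choose_spec.2.2
      · dsimp only
        rw [hcs, hsc, if_neg (show ¬(i.val + 1 = 0) by omega),
          if_pos (show i.val + 1 < n from h1)]
        apply mach01
        by_cases h : i.val = 0
        · rw [if_pos h]; left; rfl
        · rw [if_neg h, if_pos (show i.val < n by omega)]; right; rfl
    · by_cases h2 : i.val + 1 = n
      · refine ⟨1, 0, ?_, ?_, ?_⟩
        · dsimp only
          rw [dif_neg h1, if_pos h2, hcs, if_pos (show i.val < n by omega),
            hab.choose_spec.2.2, h2, hWb]
        · dsimp only
          rw [dif_neg h1, if_pos h2, hsc, if_neg (show ¬(i.val + 1 < n) from h1),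
            if_pos h2]
          exact hab.choose_spec.2.1
        · dsimp only
          rw [hcs, hsc, if_neg (show ¬(i.val + 1 = 0) by omega),
            if_neg (show ¬(i.val + 1 < n) from h1), if_pos h2,
            if_neg (show ¬(i.val = 0) by omega), if_pos (show i.val < n by omega)]
          exact mach10
      · have h3 : i.val = n := by omega
        refine ⟨0, 1, ?_, ?_, ?_⟩
        · dsimp only
          rw [dif_neg h1, if_neg h2, hcs, if_neg (show ¬(i.val < n) by omega),
            if_pos h3, (hP 0 (by omega)).choose_spec.2.1, hWa]
        · dsimp only
          rw [dif_neg h1, if_neg h2, hsc, if_neg (show ¬(i.val + 1 < n) by omega),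
            if_neg (show ¬(i.val + 1 = n) from h2)]
          exact (hP 0 (by omega)).choose_spec.2.2
        · dsimp only
          rw [hcs, hsc, if_neg (show ¬(i.val + 1 = 0) by omega),
            if_neg (show ¬(i.val + 1 < n) by omega),
            if_neg (show ¬(i.val + 1 = n) from h2),
            if_neg (show ¬(i.val = 0) by omega),
            if_neg (show ¬(i.val < n) by omega), if_pos h3]
          exact mach23
  · constructor
    · dsimp only
      rw [show ((0 : Fin (n+2)).val = 0) from rfl, if_pos rfl]
    · dsimp only
      rw [show ((Fin.last (n+1)).val = n+1) from rfl,
        if_neg (show ¬(n+1 = 0) by omega), if_neg (show ¬(n+1 < n) by omega),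
        if_neg (show ¬(n+1 = n) by omega)]
      right; rfl


/-- A digraph `G` is good for the machine of Example 1 iff
`G` is the Hasse diagram of a poset. -/
theorem hasse_machine_good_iff_hasse_diagram
    {V : Type} (E : Set (Fin 2 → V)) (hE : IsHypergraph E) :
    ¬ HasMBadCycle' E hasseMachine hasseBad ↔ IsHasseDiagram E := by
  constructor
  · intro hgood
    constructor
    · rintro ⟨n, v, hn, hc, hp⟩
      exact hgood (cycle_bad hn hc hp)
    · rintro ⟨a, b, hab, n, w, hn, hw0, hwl, hp⟩
      exact hgood (path_bad hab hn hw0 hwl hp)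
  · rintro ⟨h1, h2⟩ ⟨n, v, e, s, hc, he, hstep, hbad⟩
    simp only [hasseBad, Set.mem_setOf_eq] at hbad
    obtain ⟨hs0, hsn⟩ := hbad
    have hn1 : 1 ≤ n := by
      rcases Nat.eq_zero_or_pos n with h | h
      · subst h
        have hl : Fin.last 0 = (0 : Fin 1) := rfl
        rw [hl, hs0] at hsn
        rcases hsn with h' | h' <;> exact absurd h' (by decide)
      · omega
    have inv := bad_analysis he hstep hs0 n le_rfl
    have hlast : (⟨n, by omega⟩ : Fin (n+1)) = Fin.last n := rfl
    rw [hlast] at inv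
    rcases hsn with hsn | hsn
    · rcases inv with ⟨_, hpath⟩ | ⟨hs, _⟩ | ⟨hs, _⟩
      · exact h1 ⟨n, v, hn1, hc, fun i => hpath i i.isLt⟩
      · rw [hsn] at hs; exact absurd hs (by decide)
      · rw [hsn] at hs; exact absurd hs (by decide)
    · rcases inv with ⟨hs, _⟩ | ⟨hs, _⟩ | ⟨_, hn3, hA1, hA2, hpath⟩
      · rcases hs with hs | hs <;> rw [hsn] at hs <;> exact absurd hs (by decide)
      · rw [hsn] at hs; exact absurd hs (by decide)
      · apply h2
        set Vn : ℕ → V := fun m => v ⟨min m n, by omega⟩ with hVn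
        have hVv : ∀ m, (h : m ≤ n) → Vn m = v ⟨m, by omega⟩ := by
          intro m h
          simp only [hVn]
          congr 1
          exact Fin.ext (by simp; omega)
        have hA1' : Adj E (Vn (n-1)) (Vn 0) := by
          rw [hVv (n-1) (by omega), hVv 0 (by omega)]
          rw [show ((⟨0, by omega⟩ : Fin (n+1)) = 0) from rfl, ← hc]
          exact hA1
        have hA2' : Adj E (Vn (n-1)) (Vn (n-2)) := by
          rw [hVv (n-1) (by omega), hVv (n-2) (by omega)]
          exact hA2
        have hpath' : ∀ m, m < n - 2 → Adj E (Vn m) (Vn (m+1)) := by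
          intro m hm
          rw [hVv m (by omega), hVv (m+1) (by omega)]
          have e1 : (⟨m, by omega⟩ : Fin (n+1)) = (⟨m, by omega⟩ : Fin n).castSucc := rfl
          have e2 : (⟨m+1, by omega⟩ : Fin (n+1)) = (⟨m, show m < n by omega⟩ : Fin n).succ := rfl
          rw [e1, e2]
          exact hpath _ hm
        refine ⟨Vn (n-1), Vn (n-2), hA2', n-1,
          fun j => if j.val = 0 then Vn (n-1) else Vn (j.val - 1),
          by omega, ?_, ?_, ?_⟩
        · dsimp only
          rw [show (((0 : Fin (n-1+1))).val = 0) from rfl, if_pos rfl]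
        · dsimp only
          rw [show ((Fin.last (n-1)).val = n-1) from rfl,
            if_neg (show ¬(n-1 = 0) by omega)]
          congr 1 <;> omega
        · intro j
          have hj : j.val < n - 1 := j.isLt
          have hcs : j.castSucc.val = j.val := rfl
          have hsc : j.succ.val = j.val + 1 := rfl
          dsimp only
          rw [hcs, hsc]
          by_cases h : j.val = 0
          · rw [if_pos h, if_neg (show ¬(j.val + 1 = 0) by omega)]
            have : j.val + 1 - 1 = 0 := by omega
            rw [this]
            exact hA1'
          · rw [if_neg h, if_neg (show ¬(j.val + 1 = 0) by omega)]
            have : j.val + 1 - 1 = (j.val - 1) + 1 := by omega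
            rw [this]
            exact hpath' (j.val - 1) (by omega)
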